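/- arXiv:2210.15395 — 2 statements merged into one kernel-verified Lean document; each statement's English description precedes it below -/
import Mathlib

section
/- Let q be an RA* query of output arity m over a schema S, let D be a database over S with Null(D) = {⊥₁, …, ⊥ₙ}, let ā be an interval tuple of length m, let k ∈ ℕ, and let ∘ ∈ {<, =, >}. For r ∈ ℝⁿ let v_r be the valuation with v_r(⊥_i) = r_i. Then the set {r ∈ ℝⁿ : #(v_r(ā), q(v_r(D))) ∘ k} is a Borel-measurable subset of ℝⁿ. -/
open scoped Classical

noncomputable section

/-! ### Databases with marked nulls and the query language RA* -/

/-- An entry of an incomplete database: a real constant or a marked null `⊥ⱼ` (`Sum.inr j`). -/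
abbrev DBEntry := ℝ ⊕ ℕ

/-- A bag (multiset) of tuples of reals: a relation of a complete database. -/
abbrev Bag := Multiset (List ℝ)

/-- An incomplete database over a schema `S` (a type of relation symbols): each relation
symbol is assigned a finite bag of tuples whose entries are reals or nulls. -/
abbrev IDB (S : Type*) := S → Multiset (List DBEntry)

/-- Applying a valuation (an assignment of reals to the nulls) to an incomplete database,
entrywise, yields a complete database. -/
def applyVal {S : Type*} (v : ℕ → ℝ) (D : IDB S) : S → Bag :=
  fun R => (D R).map (fun t => t.map (Sum.elim id v))

/-- A rational function over variables `$0, $1, …`: a ratio of two multivariate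
polynomials with real coefficients (division by zero yields `0`, Lean's convention). -/
abbrev RatFn := MvPolynomial ℕ ℝ × MvPolynomial ℕ ℝ

/-- Evaluation of a rational function. -/
def evalRatFn (f : RatFn) (x : ℕ → ℝ) : ℝ :=
  MvPolynomial.eval x f.1 / MvPolynomial.eval x f.2

/-- The `i`-th attribute of a tuple (`0`-indexed; out-of-range positions default to `0`). -/
def attr (t : List ℝ) (i : ℕ) : ℝ := t.getD i 0

/-- Syntax of RA* queries over a schema `S`: base relations, projection, selections
`$i = $j` and `$i < $j`, product, union, difference, application of a rational function,
and grouping with summation. -/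
inductive RAQuery (S : Type*) where
  | base (R : S)
  | proj (idx : List ℕ) (q : RAQuery S)
  | selEq (i j : ℕ) (q : RAQuery S)
  | selLt (i j : ℕ) (q : RAQuery S)
  | prod (q₁ q₂ : RAQuery S)
  | union (q₁ q₂ : RAQuery S)
  | diff (q₁ q₂ : RAQuery S)
  | app (f : RatFn) (q : RAQuery S)
  | sumAgg (keys : List ℕ) (j : ℕ) (q : RAQuery S)

/-- Bag semantics of RA* queries on complete databases. -/
def RAQuery.eval {S : Type*} (D : S → Bag) : RAQuery S → Bag
  | base R => D R
  | proj idx q => (q.eval D).map (fun t => idx.map (attr t))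
  | selEq i j q => (q.eval D).filter (fun t => attr t i = attr t j)
  | selLt i j q => (q.eval D).filter (fun t => attr t i < attr t j)
  | prod q₁ q₂ => (q₁.eval D).bind (fun t₁ => (q₂.eval D).map (fun t₂ => t₁ ++ t₂))
  | union q₁ q₂ => q₁.eval D + q₂.eval D
  | diff q₁ q₂ => q₁.eval D - q₂.eval D
  | app f q => (q.eval D).map (fun t => t ++ [evalRatFn f (attr t)])
  | sumAgg keys j q =>
      let B := q.eval D
      if keys = [] ∧ B = 0 then {[0]}
      else ((B.map (fun t => keys.map (attr t))).dedup).map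
        (fun k => k ++
          [((B.filter (fun t => keys.map (attr t) = k)).map (fun t => attr t j)).sum])

/-! ### Interval tuples -/

/-- An entry of an interval tuple: an interval whose endpoints are rational functions over
the nulls or `±∞` (`none`), each endpoint being open or closed. -/
structure IntervalEntry where
  lo : Option RatFn          -- `none` means `-∞`
  hi : Option RatFn          -- `none` means `+∞`
  loClosed : Bool
  hiClosed : Bool

/-- Membership of a real `x` in the interval obtained from `a` by evaluating its endpoints
under the valuation `v`. -/
def IntervalEntry.memVal (a : IntervalEntry) (v : ℕ → ℝ) (x : ℝ) : Prop :=
  (match a.lo with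
    | none => True
    | some e => if a.loClosed then evalRatFn e v ≤ x else evalRatFn e v < x) ∧
  (match a.hi with
    | none => True
    | some e => if a.hiClosed then x ≤ evalRatFn e v else x < evalRatFn e v)

/-- A real tuple `t` is consistent with the interval tuple `a` instantiated by `v` if it has
the same length and each component lies in the corresponding interval. -/
def consistent (a : List IntervalEntry) (v : ℕ → ℝ) (t : List ℝ) : Prop :=
  t.length = a.length ∧ ∀ i : Fin a.length, (a.get i).memVal v (attr t i)

/-- `#(v(a), B)`: the number of tuples of the bag `B`, counted with multiplicity, that are
consistent with `v(a)`. -/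
def countConsistent (a : List IntervalEntry) (v : ℕ → ℝ) (B : Bag) : ℕ :=
  Multiset.card (B.filter (consistent a v))

/-- The valuation `v_r` sending the null `⊥ᵢ` to `r i` (and nulls beyond `n` to `0`). -/
def valOf {n : ℕ} (r : Fin n → ℝ) : ℕ → ℝ :=
  fun j => if h : j < n then r ⟨j, h⟩ else 0

/-- All nulls occurring in the database `D` are among `⊥₀, …, ⊥_{n-1}`. -/
def nullsBelow {S : Type*} (D : IDB S) (n : ℕ) : Prop :=
  ∀ R : S, ∀ t ∈ D R, ∀ j : ℕ, Sum.inr j ∈ t → j < n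

/-- All null variables of a rational function are among `⊥₀, …, ⊥_{n-1}`. -/
def RatFnVarsBelow (f : RatFn) (n : ℕ) : Prop :=
  (∀ j ∈ f.1.vars, j < n) ∧ (∀ j ∈ f.2.vars, j < n)

/-- All null variables of the endpoints of an interval entry are among `⊥₀, …, ⊥_{n-1}`. -/
def IntervalEntry.varsBelow (a : IntervalEntry) (n : ℕ) : Prop :=
  (∀ e ∈ a.lo, RatFnVarsBelow e n) ∧ (∀ e ∈ a.hi, RatFnVarsBelow e n)

/-!
Call a family `B : α → Bag` measurable if it is a finite sum `∑ᵢ mᵢ r • {tᵢ r}` of singletons,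
with measurable multiplicities `mᵢ : α → ℕ` and tuples `tᵢ r` of fixed length with measurable
coordinates. Such families are closed under all RA* operators. Sums, products, selections and
rational-function applications are direct; difference, duplicate elimination and grouping
follow because a family whose support is covered by a measurable family, and whose count at
every measurable tuple is measurable, is itself measurable. The bag `v_r(D)` is such a family,
hence so is `q(v_r(D))`, and then `r ↦ #(v_r(ā), q(v_r(D)))` is a measurable `ℕ`-valued map:
the preimage of any set of naturals, in particular `{m | m ∘ k}`, is measurable.
-/

lemma attr_eq_getElem {t : List ℝ} {i : ℕ} (h : i < t.length) : attr t i = t[i] := by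
  simp [attr, List.getD_eq_getElem?_getD, List.getElem?_eq_getElem h]

lemma attr_map {β : Type*} (g : β → ℝ) (t : List β) (i : ℕ) :
    attr (t.map g) i = (t[i]?.map g).getD 0 := by
  simp [attr, List.getD_eq_getElem?_getD]

lemma attr_append (s t : List ℝ) (i : ℕ) :
    attr (s ++ t) i = if i < s.length then attr s i else attr t (i - s.length) := by
  split_ifs with h
  · exact List.getD_append s t 0 i h
  · exact List.getD_append_right s t 0 i (by omega)

lemma eq_iff_forall_attr_eq {s t : List ℝ} (h : s.length = t.length) :
    s = t ↔ ∀ i, attr s i = attr t i := by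
  refine ⟨fun hst i => hst ▸ rfl, fun hst => List.ext_getElem h fun i hs ht => ?_⟩
  simpa [attr_eq_getElem hs, attr_eq_getElem ht] using hst i

section MeasurableTuple

variable {α : Type*} [MeasurableSpace α]

structure MeasurableTuple (L : ℕ) (f : α → List ℝ) : Prop where
  length_eq : ∀ r, (f r).length = L
  measurable_attr : ∀ i, Measurable fun r => attr (f r) i

namespace MeasurableTuple

lemma const (t : List ℝ) : MeasurableTuple (α := α) t.length fun _ => t :=
  ⟨fun _ => rfl, fun _ => measurable_const⟩

lemma map {β : Type*} (t : List β) {φ : α → β → ℝ} (hφ : ∀ b, Measurable (φ · b)) :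
    MeasurableTuple t.length fun r => t.map (φ r) := by
  refine ⟨fun r => List.length_map _, fun i => ?_⟩
  simp only [attr_map]
  cases t[i]? with
  | none => exact measurable_const
  | some b => exact hφ b

lemma proj {f : α → List ℝ} {L : ℕ} (hf : MeasurableTuple L f) (idx : List ℕ) :
    MeasurableTuple idx.length fun r => idx.map (attr (f r)) :=
  map idx hf.measurable_attr

lemma singleton {v : α → ℝ} (hv : Measurable v) : MeasurableTuple 1 fun r => [v r] :=
  ⟨fun _ => rfl, fun i => by cases i <;> simp [attr, hv]⟩

lemma append {f g : α → List ℝ} {L L' : ℕ} (hf : MeasurableTuple L f)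
    (hg : MeasurableTuple L' g) : MeasurableTuple (L + L') fun r => f r ++ g r := by
  refine ⟨fun r => by simp [hf.length_eq r, hg.length_eq r], fun i => ?_⟩
  simp only [attr_append, hf.length_eq]
  split_ifs
  exacts [hf.measurable_attr i, hg.measurable_attr _]

lemma measurableSet_eq {f g : α → List ℝ} {L L' : ℕ} (hf : MeasurableTuple L f)
    (hg : MeasurableTuple L' g) : MeasurableSet {r | f r = g r} := by
  have : {r | f r = g r} = {_r | L = L'} ∩ ⋂ i, {r | attr (f r) i = attr (g r) i} := by
    ext r
    simp only [Set.mem_ofPred_eq, Set.mem_inter_iff, Set.mem_iInter]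
    rw [← hf.length_eq r, ← hg.length_eq r]
    exact ⟨fun h => ⟨congrArg _ h, (eq_iff_forall_attr_eq (congrArg _ h)).1 h⟩,
      fun ⟨hL, h⟩ => (eq_iff_forall_attr_eq hL).2 h⟩
  rw [this]
  exact (MeasurableSet.const _).inter <| .iInter fun i =>
    measurableSet_eq_fun (hf.measurable_attr i) (hg.measurable_attr i)

end MeasurableTuple

end MeasurableTuple

section Consistent

variable {α : Type*} [MeasurableSpace α] {v : α → ℕ → ℝ}

lemma measurable_evalRatFn (f : RatFn) (hv : Measurable v) :
    Measurable fun r => evalRatFn f (v r) :=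
  ((MvPolynomial.continuous_eval f.1).measurable.comp hv).div
    ((MvPolynomial.continuous_eval f.2).measurable.comp hv)

lemma measurableSet_memVal (e : IntervalEntry) (hv : Measurable v) {x : α → ℝ}
    (hx : Measurable x) : MeasurableSet {r | e.memVal (v r) (x r)} := by
  obtain ⟨lo, hi, loClosed, hiClosed⟩ := e
  refine MeasurableSet.inter (s₁ := {r | _}) (s₂ := {r | _}) ?_ ?_
  · rcases lo with _ | f
    · exact MeasurableSet.univ
    · cases loClosed
      exacts [measurableSet_lt (measurable_evalRatFn f hv) hx,
        measurableSet_le (measurable_evalRatFn f hv) hx]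
  · rcases hi with _ | f
    · exact MeasurableSet.univ
    · cases hiClosed
      exacts [measurableSet_lt hx (measurable_evalRatFn f hv),
        measurableSet_le hx (measurable_evalRatFn f hv)]

lemma measurableSet_consistent (a : List IntervalEntry) (hv : Measurable v)
    {f : α → List ℝ} {L : ℕ} (hf : MeasurableTuple L f) :
    MeasurableSet {r | consistent a (v r) (f r)} := by
  simp only [consistent, hf.length_eq, Set.ofPred_and, Set.ofPred_forall]
  exact (MeasurableSet.const _).inter <| .iInter fun i =>
    measurableSet_memVal _ hv (hf.measurable_attr i)

end Consistent

section MeasurableBag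

variable {α : Type*}

lemma measurable_list_sum_map {M ι : Type*} [MeasurableSpace α] [AddMonoid M]
    [MeasurableSpace M] [MeasurableAdd₂ M]
    (l : List ι) {f : ι → α → M} (hf : ∀ i ∈ l, Measurable (f i)) :
    Measurable fun r => (l.map (f · r)).sum := by
  simpa [List.map_map, Function.comp_def] using
    (l.map f).measurable_fun_sum (by simpa using hf)

def bagOfTerms (L : List ((α → ℕ) × (α → List ℝ))) (r : α) : Bag :=
  (L.map fun p => p.1 r • {p.2 r}).sum

lemma map_bagOfTerms {M : Type*} [AddCommMonoid M] (F : Bag →+ M)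
    (L : List ((α → ℕ) × (α → List ℝ))) (r : α) :
    F (bagOfTerms L r) = (L.map fun p => p.1 r • F {p.2 r}).sum := by
  simp [bagOfTerms, map_list_sum, List.map_map, Function.comp_def, map_nsmul]

lemma mem_bagOfTerms {L : List ((α → ℕ) × (α → List ℝ))} {r : α} {x : List ℝ} :
    x ∈ bagOfTerms L r ↔ ∃ p ∈ L, p.1 r ≠ 0 ∧ p.2 r = x := by
  induction L with
  | nil => simp [bagOfTerms]
  | cons p L ih =>
    simp only [bagOfTerms] at ih ⊢
    simp [ih, Multiset.mem_nsmul, eq_comm]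

variable [MeasurableSpace α]

def MeasurableBag (B : α → Bag) : Prop :=
  ∃ L : List ((α → ℕ) × (α → List ℝ)),
    (∀ p ∈ L, Measurable p.1 ∧ ∃ m, MeasurableTuple m p.2) ∧ B = bagOfTerms L

namespace MeasurableBag

variable {B B₁ B₂ : α → Bag}

lemma zero : MeasurableBag fun _ : α => (0 : Bag) :=
  ⟨[], by simp, rfl⟩

lemma singleton {f : α → List ℝ} {L : ℕ} (hf : MeasurableTuple L f) :
    MeasurableBag fun r => {f r} :=
  ⟨[(1, f)], by simpa using ⟨measurable_const, L, hf⟩, by funext r; simp [bagOfTerms]⟩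

lemma add (h₁ : MeasurableBag B₁) (h₂ : MeasurableBag B₂) :
    MeasurableBag fun r => B₁ r + B₂ r := by
  obtain ⟨L₁, hL₁, rfl⟩ := h₁
  obtain ⟨L₂, hL₂, rfl⟩ := h₂
  refine ⟨L₁ ++ L₂, fun p hp => ?_, by funext r; simp [bagOfTerms]⟩
  rcases List.mem_append.1 hp with hp | hp
  exacts [hL₁ p hp, hL₂ p hp]

lemma nsmul {m : α → ℕ} (hm : Measurable m) (hB : MeasurableBag B) :
    MeasurableBag fun r => m r • B r := by
  obtain ⟨L, hL, rfl⟩ := hB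
  refine ⟨L.map fun p => (m * p.1, p.2), ?_, ?_⟩
  · simp only [List.mem_map]
    rintro _ ⟨p, hp, rfl⟩
    exact ⟨hm.mul (hL p hp).1, (hL p hp).2⟩
  · funext r
    simp [bagOfTerms, List.smul_sum, List.map_map, Function.comp_def, smul_smul]

lemma list_sum {ι : Type*} (l : List ι) {B : ι → α → Bag}
    (hB : ∀ i ∈ l, MeasurableBag (B i)) : MeasurableBag fun r => (l.map (B · r)).sum := by
  induction l with
  | nil => exact zero
  | cons i l ih =>
    simpa using (hB i List.mem_cons_self).add (ih fun j hj => hB j (List.mem_cons_of_mem _ hj))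

lemma ite {p : α → Prop} [DecidablePred p] (hp : MeasurableSet {r | p r})
    (h₁ : MeasurableBag B₁) (h₂ : MeasurableBag B₂) :
    MeasurableBag fun r => if p r then B₁ r else B₂ r := by
  have key : ∀ r, (if p r then B₁ r else B₂ r)
      = (if p r then 1 else 0) • B₁ r + (if p r then 0 else 1) • B₂ r := by
    intro r; split_ifs <;> simp
  simp only [key]
  exact (nsmul (measurable_const.ite hp measurable_const) h₁).add
    (nsmul (measurable_const.ite hp measurable_const) h₂)

lemma bind (hB : MeasurableBag B) {F : α → List ℝ → Bag}
    (hF : ∀ L f, MeasurableTuple L f → MeasurableBag fun r => F r (f r)) :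
    MeasurableBag fun r => (B r).bind (F r) := by
  obtain ⟨L, hL, rfl⟩ := hB
  have key : ∀ r, (bagOfTerms L r).bind (F r) = (L.map fun p => p.1 r • F r (p.2 r)).sum :=
    fun r => by
      simpa using map_bagOfTerms
        { toFun := fun s => s.bind (F r), map_zero' := Multiset.zero_bind _,
          map_add' := fun s t => Multiset.add_bind s t _ } L r
  simp only [key]
  exact list_sum L fun p hp => nsmul (hL p hp).1 (hF _ _ (hL p hp).2.choose_spec)

lemma map (hB : MeasurableBag B) {G : α → List ℝ → List ℝ}
    (hG : ∀ L f, MeasurableTuple L f → ∃ L', MeasurableTuple L' fun r => G r (f r)) :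
    MeasurableBag fun r => (B r).map (G r) := by
  simpa only [Multiset.bind_singleton] using
    hB.bind (F := fun r t => {G r t}) fun L f hf => singleton (hG L f hf).choose_spec

lemma filter (hB : MeasurableBag B) (P : α → List ℝ → Prop) [∀ r, DecidablePred (P r)]
    (hP : ∀ L f, MeasurableTuple L f → MeasurableSet {r | P r (f r)}) :
    MeasurableBag fun r => (B r).filter (P r) := by
  simpa only [← Multiset.filter_eq_bind] using
    hB.bind (F := fun r t => if P r t then {t} else 0) fun L f hf =>
      ite (hP L f hf) (singleton hf) zero

lemma multiset_map {β : Type*} (M : Multiset β) {G : α → β → List ℝ}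
    (hG : ∀ b, ∃ L, MeasurableTuple L (G · b)) : MeasurableBag fun r => M.map (G r) := by
  have key : ∀ r, M.map (G r) = (M.toList.map fun b => ({G r b} : Bag)).sum := fun r => by
    conv_lhs => rw [← Multiset.coe_toList M, ← Multiset.sum_map_singleton (Multiset.map _ _)]
    simp
  simp only [key]
  exact list_sum _ fun b _ => singleton (hG b).choose_spec

lemma measurable_sum_map {M : Type*} [AddCommMonoid M] [MeasurableSpace M] [MeasurableAdd₂ M]
    (hB : MeasurableBag B) {φ : α → List ℝ → M}
    (hφ : ∀ L f, MeasurableTuple L f → Measurable fun r => φ r (f r)) :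
    Measurable fun r => ((B r).map (φ r)).sum := by
  obtain ⟨L, hL, rfl⟩ := hB
  have key : ∀ r, ((bagOfTerms L r).map (φ r)).sum = (L.map fun p => p.1 r • φ r (p.2 r)).sum :=
    fun r => by
      simpa using map_bagOfTerms (Multiset.sumAddMonoidHom.comp
        (Multiset.mapAddMonoidHom (φ r))) L r
  simp only [key]
  exact measurable_list_sum_map L fun p hp =>
    (hL p hp).1.smul (hφ _ _ (hL p hp).2.choose_spec)

lemma measurable_card (hB : MeasurableBag B) : Measurable fun r => Multiset.card (B r) := by
  simpa [Multiset.map_const', Multiset.sum_replicate] using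
    hB.measurable_sum_map (φ := fun _ _ => (1 : ℕ)) fun _ _ _ => measurable_const

lemma measurable_count (hB : MeasurableBag B) {f : α → List ℝ} {L : ℕ}
    (hf : MeasurableTuple L f) : Measurable fun r => (B r).count (f r) := by
  simpa only [Multiset.count_eq_card_filter_eq] using
    (hB.filter (fun r t => f r = t) fun _ _ hg => hf.measurableSet_eq hg).measurable_card

end MeasurableBag

end MeasurableBag

section CountPresentation

variable {α : Type*}

-- Each tuple of `B r` is charged to its last occurrence among the `g r`.
def termsOfCount (B : α → Bag) : List (α → List ℝ) → List ((α → ℕ) × (α → List ℝ))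
  | [] => []
  | g :: gs => (fun r => if ∃ g' ∈ gs, g' r = g r then 0 else (B r).count (g r), g) ::
      termsOfCount B gs

lemma bagOfTerms_termsOfCount (B : α → Bag) (gs : List (α → List ℝ)) (r : α) :
    bagOfTerms (termsOfCount B gs) r = (B r).filter fun x => ∃ g ∈ gs, g r = x := by
  induction gs with
  | nil => simp [termsOfCount, bagOfTerms]
  | cons g gs ih =>
    simp only [bagOfTerms] at ih ⊢
    ext x
    simp only [termsOfCount, List.map_cons, List.sum_cons, Multiset.count_add, ih,
      Multiset.count_filter, Multiset.count_nsmul, Multiset.count_singleton, List.mem_cons]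
    by_cases hx : g r = x
    · subst hx
      by_cases h : ∃ g' ∈ gs, g' r = g r <;> simp [h]
    · simp [hx, Ne.symm hx]

variable [MeasurableSpace α]

lemma MeasurableBag.of_measurable_count {B B' : α → Bag} (hB' : MeasurableBag B')
    (hle : ∀ r, ∀ x ∈ B r, x ∈ B' r)
    (hcount : ∀ L f, MeasurableTuple L f → Measurable fun r => (B r).count (f r)) :
    MeasurableBag B := by
  obtain ⟨L', hL', rfl⟩ := hB'
  have htuple : ∀ g ∈ L'.map Prod.snd, ∃ L, MeasurableTuple L g := by
    simp only [List.mem_map]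
    rintro _ ⟨p, hp, rfl⟩
    exact (hL' p hp).2
  refine ⟨termsOfCount B (L'.map Prod.snd), ?_, funext fun r => ?_⟩
  · generalize L'.map Prod.snd = gs at htuple
    induction gs with
    | nil => simp [termsOfCount]
    | cons g gs ih =>
      simp only [List.forall_mem_cons] at htuple
      obtain ⟨⟨L, hg⟩, htuple⟩ := htuple
      have hlater : MeasurableSet {r | ∃ g' ∈ gs, g' r = g r} := by
        rw [show {r | ∃ g' ∈ gs, g' r = g r} = ⋃ g' ∈ gs, {r | g' r = g r} by ext; simp]
        refine .biUnion gs.finite_toSet.countable fun g' hg' => ?_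
        obtain ⟨L', hg'⟩ := htuple g' hg'
        exact hg'.measurableSet_eq hg
      simp only [termsOfCount, List.forall_mem_cons]
      exact ⟨⟨measurable_const.ite hlater (hcount L g hg), L, hg⟩, ih htuple⟩
  · rw [bagOfTerms_termsOfCount, Multiset.filter_eq_self.2]
    intro x hx
    obtain ⟨p, hp, -, rfl⟩ := mem_bagOfTerms.1 (hle r x hx)
    exact ⟨p.2, List.mem_map_of_mem hp, rfl⟩

end CountPresentation

namespace MeasurableBag

variable {α : Type*} [MeasurableSpace α] {B B₁ B₂ : α → Bag}

lemma sub (h₁ : MeasurableBag B₁) (h₂ : MeasurableBag B₂) :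
    MeasurableBag fun r => B₁ r - B₂ r :=
  h₁.of_measurable_count (fun _ _ hx => Multiset.mem_of_le (Multiset.sub_le_self _ _) hx)
    fun _ _ hf => by
      simp only [Multiset.count_sub]
      exact (h₁.measurable_count hf).sub (h₂.measurable_count hf)

lemma dedup (hB : MeasurableBag B) : MeasurableBag fun r => (B r).dedup :=
  hB.of_measurable_count (fun _ _ => Multiset.mem_dedup.1) fun _ _ hf => by
    simp only [Multiset.count_dedup, ← Multiset.count_pos]
    exact (measurable_from_nat (f := fun c => if 0 < c then 1 else 0)).comp
      (hB.measurable_count hf)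

lemma groupSum (hB : MeasurableBag B) (keys : List ℕ) (j : ℕ) :
    MeasurableBag fun r => ((B r).map fun t => keys.map (attr t)).dedup.map fun k =>
      k ++ [(((B r).filter fun t => keys.map (attr t) = k).map fun t => attr t j).sum] := by
  set S : α → List ℝ → ℝ := fun r k =>
    (((B r).filter fun t => keys.map (attr t) = k).map fun t => attr t j).sum
  have hS : ∀ L f, MeasurableTuple L f → Measurable fun r => S r (keys.map (attr (f r))) :=
    fun L f hf => (hB.filter (fun r t => keys.map (attr t) = keys.map (attr (f r)))
      fun _ _ hg => (hg.proj keys).measurableSet_eq (hf.proj keys)).measurable_sum_map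
      fun _ _ hg => hg.measurable_attr j
  -- The grouped bag is the duplicate-free image of `B r` under `t ↦ key t ++ [S r (key t)]`.
  convert (hB.map (G := fun r t => keys.map (attr t) ++ [S r (keys.map (attr t))])
    fun L f hf => ⟨_, (hf.proj keys).append (.singleton (hS L f hf))⟩).dedup
    using 2 with r
  rw [← Multiset.dedup_map_of_injective (f := fun k => k ++ [S r k])
    fun k k' h => List.append_inj_left' h rfl, Multiset.map_map]
  rfl

lemma measurable_countConsistent (hB : MeasurableBag B) (a : List IntervalEntry)
    {v : α → ℕ → ℝ} (hv : Measurable v) :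
    Measurable fun r => countConsistent a (v r) (B r) :=
  (hB.filter (fun r => consistent a (v r)) fun _ _ hf =>
    measurableSet_consistent a hv hf).measurable_card

end MeasurableBag

lemma measurableBag_eval {S α : Type*} [MeasurableSpace α] (D : IDB S) {v : α → ℕ → ℝ}
    (hv : Measurable v) (q : RAQuery S) :
    MeasurableBag fun r => q.eval (applyVal (v r) D) := by
  induction q with
  | base R =>
    refine MeasurableBag.multiset_map (D R) fun t => ⟨_, MeasurableTuple.map t fun b => ?_⟩
    cases b
    exacts [measurable_const, measurable_pi_iff.1 hv _]
  | proj idx q ih => exact ih.map fun _ _ hf => ⟨_, hf.proj idx⟩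
  | selEq i j q ih =>
    exact ih.filter _ fun _ _ hf =>
      measurableSet_eq_fun (hf.measurable_attr i) (hf.measurable_attr j)
  | selLt i j q ih =>
    exact ih.filter _ fun _ _ hf => measurableSet_lt (hf.measurable_attr i) (hf.measurable_attr j)
  | prod q₁ q₂ ih₁ ih₂ => exact ih₁.bind fun _ _ hf => ih₂.map fun _ _ hg => ⟨_, hf.append hg⟩
  | union q₁ q₂ ih₁ ih₂ => exact ih₁.add ih₂
  | diff q₁ q₂ ih₁ ih₂ => exact ih₁.sub ih₂
  | app f q ih =>
    exact ih.map fun _ _ hg => ⟨_, hg.append (.singleton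
      (measurable_evalRatFn f (measurable_pi_iff.2 hg.measurable_attr)))⟩
  | sumAgg keys j q ih =>
    refine MeasurableBag.ite ?_ (MeasurableBag.multiset_map {[0]} fun t => ⟨_, .const t⟩)
      (ih.groupSum keys j)
    simp only [Set.ofPred_and, ← Multiset.card_eq_zero]
    exact (MeasurableSet.const _).inter (ih.measurable_card (measurableSet_singleton 0))

lemma measurable_valOf (n : ℕ) : Measurable (valOf : (Fin n → ℝ) → ℕ → ℝ) := by
  refine measurable_pi_iff.2 fun j => ?_
  by_cases h : j < n <;> simp [valOf, h, measurable_pi_apply]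

theorem target_set_borel_measurable_general
    {S : Type*} (q : RAQuery S) (D : IDB S) (n : ℕ)
    (a : List IntervalEntry)
    (k : ℕ) (cmp : ℕ → ℕ → Prop) :
    MeasurableSet {r : Fin n → ℝ |
      cmp (countConsistent a (valOf r) (q.eval (applyVal (valOf r) D))) k} :=
  (measurableBag_eval D (measurable_valOf n) q).measurable_countConsistent a
    (measurable_valOf n) (MeasurableSet.of_discrete (s := {m | cmp m k}))

/-- **Theorem 4.2 / Claim C.3.** Let `q` be an RA* query, `D` a database whose
nulls are `⊥₀, …, ⊥_{n-1}`, `a` an interval tuple (over these nulls), `k ∈ ℕ` and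
`∘ ∈ {<, =, >}`. For `r ∈ ℝⁿ` let `v_r` be the valuation with `v_r(⊥ᵢ) = rᵢ`. Then the set
`{r ∈ ℝⁿ : #(v_r(a), q(v_r(D))) ∘ k}` is a Borel-measurable subset of `ℝⁿ`. -/
theorem target_set_borel_measurable
    {S : Type*} (q : RAQuery S) (D : IDB S) (n : ℕ) (hD : nullsBelow D n)
    (a : List IntervalEntry) (ha : ∀ e ∈ a, e.varsBelow n)
    (k : ℕ) (cmp : ℕ → ℕ → Prop)
    (hcmp : cmp = (· < ·) ∨ cmp = (· = ·) ∨ cmp = (· > ·)) :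
    MeasurableSet {r : Fin n → ℝ |
      cmp (countConsistent a (valOf r) (q.eval (applyVal (valOf r) D))) k} :=
  target_set_borel_measurable_general q D n a k cmp

end
end

section
/- For every RA* query q over a schema S and every database D over S, there exists a finite b ∈ ℕ such that for every valuation v : Null(D) → ℝ, the active domain of q(v(D)) — the set of real numbers occurring as a component of some tuple of the bag q(v(D)) — has at most b elements. -/
open scoped Classical

noncomputable section

/-- The active domain of a bag: the (finite) set of reals occurring as a component of
some tuple of the bag. -/
def adom (B : Bag) : Finset ℝ := B.toFinset.biUnion (fun t => t.toFinset)

/-! The answer to `q` on `v(D)` has a number of tuples and an arity of tuples that can be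
bounded by induction on `q` without looking at `v`: selection, difference and duplicate
elimination only shrink a bag, and every other operator acts on the shape of its input
alone. A bag of at most `n` tuples of length at most `L` mentions at most `n * L` values. -/

def BoundedBags {ι α : Type*} (F : ι → Multiset (List α)) : Prop :=
  ∃ n L : ℕ, ∀ i, Multiset.card (F i) ≤ n ∧ ∀ t ∈ F i, t.length ≤ L

namespace BoundedBags

variable {ι α β : Type*} {F G : ι → Multiset (List α)}

lemma const (B : Multiset (List α)) : BoundedBags fun _ : ι => B :=
  ⟨Multiset.card B, (B.map List.length).sum, fun _ =>
    ⟨le_rfl, fun _ ht => Multiset.le_sum_of_mem (Multiset.mem_map_of_mem _ ht)⟩⟩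

lemma mono (hG : BoundedBags G) (h : ∀ i, F i ≤ G i) : BoundedBags F := by
  obtain ⟨n, L, hnL⟩ := hG
  exact ⟨n, L, fun i => ⟨(Multiset.card_le_card (h i)).trans (hnL i).1,
    fun t ht => (hnL i).2 t (Multiset.mem_of_le (h i) ht)⟩⟩

lemma map (hF : BoundedBags F) {g : ι → List α → List β} (c : ℕ)
    (hg : ∀ i t, (g i t).length ≤ t.length + c) :
    BoundedBags fun i => (F i).map (g i) := by
  obtain ⟨n, L, hnL⟩ := hF
  refine ⟨n, L + c, fun i => ⟨by simpa using (hnL i).1, fun t ht => ?_⟩⟩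
  obtain ⟨s, hs, rfl⟩ := Multiset.mem_map.mp ht
  exact (hg i s).trans (Nat.add_le_add_right ((hnL i).2 s hs) c)

lemma add (hF : BoundedBags F) (hG : BoundedBags G) : BoundedBags fun i => F i + G i := by
  obtain ⟨n₁, L₁, h₁⟩ := hF
  obtain ⟨n₂, L₂, h₂⟩ := hG
  refine ⟨n₁ + n₂, max L₁ L₂, fun i => ⟨?_, fun t ht => ?_⟩⟩
  · rw [Multiset.card_add]
    exact add_le_add (h₁ i).1 (h₂ i).1
  · rcases Multiset.mem_add.mp ht with ht | ht
    · exact ((h₁ i).2 t ht).trans (le_max_left _ _)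
    · exact ((h₂ i).2 t ht).trans (le_max_right _ _)

lemma bind_map_append (hF : BoundedBags F) (hG : BoundedBags G) :
    BoundedBags fun i => (F i).bind fun t₁ => (G i).map (t₁ ++ ·) := by
  obtain ⟨n₁, L₁, h₁⟩ := hF
  obtain ⟨n₂, L₂, h₂⟩ := hG
  refine ⟨n₁ * n₂, L₁ + L₂, fun i => ⟨?_, fun t ht => ?_⟩⟩
  · rw [Multiset.card_bind]
    calc ((F i).map fun t₁ => Multiset.card ((G i).map (t₁ ++ ·))).sum
        ≤ Multiset.card (F i) * n₂ := by
          simpa using Multiset.sum_map_le_sum_map _ (fun _ => n₂) (fun _ _ => (h₂ i).1)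
      _ ≤ n₁ * n₂ := Nat.mul_le_mul_right _ (h₁ i).1
  · obtain ⟨t₁, ht₁, t₂, ht₂, rfl⟩ := by
      simpa only [Multiset.mem_bind, Multiset.mem_map] using ht
    rw [List.length_append]
    exact add_le_add ((h₁ i).2 t₁ ht₁) ((h₂ i).2 t₂ ht₂)

lemma ite (hF : BoundedBags F) (hG : BoundedBags G) (p : ι → Prop) [DecidablePred p] :
    BoundedBags fun i => if p i then F i else G i := by
  obtain ⟨n₁, L₁, h₁⟩ := hF
  obtain ⟨n₂, L₂, h₂⟩ := hG
  refine ⟨max n₁ n₂, max L₁ L₂, fun i => ?_⟩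
  dsimp only
  split_ifs
  · exact ⟨(h₁ i).1.trans (le_max_left _ _),
      fun t ht => ((h₁ i).2 t ht).trans (le_max_left _ _)⟩
  · exact ⟨(h₂ i).1.trans (le_max_right _ _),
      fun t ht => ((h₂ i).2 t ht).trans (le_max_right _ _)⟩

end BoundedBags

lemma boundedBags_eval {S : Type*} (q : RAQuery S) (D : IDB S) :
    BoundedBags fun v => q.eval (applyVal v D) := by
  induction q with
  | base R => exact (BoundedBags.const (D R)).map 0 fun _ t => by simp
  | proj idx q ih => refine ih.map idx.length fun _ t => ?_; simp
  | selEq i j q ih => exact ih.mono fun _ => Multiset.filter_le _ _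
  | selLt i j q ih => exact ih.mono fun _ => Multiset.filter_le _ _
  | prod q₁ q₂ ih₁ ih₂ => exact ih₁.bind_map_append ih₂
  | union q₁ q₂ ih₁ ih₂ => exact ih₁.add ih₂
  | diff q₁ q₂ ih₁ ih₂ => exact ih₁.mono fun _ => tsub_le_self
  | app f q ih => refine ih.map 1 fun _ t => ?_; simp
  | sumAgg keys j q ih =>
      simp only [RAQuery.eval]
      have hkeys := (ih.map (g := fun _ t => keys.map (attr t)) keys.length
        fun _ t => by simp).mono fun _ => Multiset.dedup_le _
      refine (BoundedBags.const {[(0 : ℝ)]}).ite (hkeys.map 1 fun _ t => ?_) _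
      simp

lemma card_adom_le (B : Bag) {L : ℕ} (hL : ∀ t ∈ B, t.length ≤ L) :
    (adom B).card ≤ Multiset.card B * L :=
  calc (adom B).card
      ≤ ∑ t ∈ B.toFinset, t.toFinset.card := Finset.card_biUnion_le
    _ ≤ B.toFinset.card * L := Finset.sum_le_card_nsmul _ _ _ fun t ht =>
        (List.toFinset_card_le t).trans (hL t (Multiset.mem_toFinset.mp ht))
    _ ≤ Multiset.card B * L := Nat.mul_le_mul_right _ (Multiset.toFinset_card_le B)

/-- **Lemma C.5.** For every RA* query `q` over a schema `S` and every
incomplete database `D` over `S`, there is a finite bound `b` such that for every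
valuation `v` of the nulls, the active domain of `q(v(D))` has at most `b` elements. -/
theorem adom_of_answer_bounded {S : Type*} (q : RAQuery S) (D : IDB S) :
    ∃ b : ℕ, ∀ v : ℕ → ℝ, (adom (q.eval (applyVal v D))).card ≤ b := by
  obtain ⟨n, L, hnL⟩ := boundedBags_eval q D
  exact ⟨n * L, fun v => (card_adom_le _ (hnL v).2).trans (Nat.mul_le_mul_right _ (hnL v).1)⟩

end
end
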